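/- For an N-periodic dressing chain, the transition matrix T(λ) = V_N(λ + β_{N−1}) ⋯ V_2(λ + β_1) V_1(λ) satisfies the Lax equation Ṫ(λ) = U_1(λ + α) T(λ) − T(λ) U_1(λ) for every λ ∈ ℝ, where the dot is the entrywise x-derivative and α = Σ_{n=1}^N α_n. -/

import Mathlib

/-- Adler's matrix V_n(λ) with rows (v_n, 1) and (λ + v_n², v_n), at position x. -/
noncomputable def adlerV (v : ℤ → ℝ → ℝ) (n : ℤ) (lam x : ℝ) : Matrix (Fin 2) (Fin 2) ℝ :=
  !![v n x, 1; lam + (v n x) ^ 2, v n x]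

/-- Adler's matrix U_n(λ) with rows (0, 1) and (λ + u_n, 0), where u_n = v_n² - v̇_n. -/
noncomputable def adlerU (v : ℤ → ℝ → ℝ) (n : ℤ) (lam x : ℝ) : Matrix (Fin 2) (Fin 2) ℝ :=
  !![0, 1; lam + ((v n x) ^ 2 - deriv (v n) x), 0]

/-- Partial transition matrix: `transT v α lam x k = V_k(λ+β_{k-1}) ⋯ V_2(λ+β_1) V_1(λ)`,
where β_k = α_1 + ⋯ + α_k. -/
noncomputable def transT (v : ℤ → ℝ → ℝ) (α : ℤ → ℝ) (lam x : ℝ) :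
    ℕ → Matrix (Fin 2) (Fin 2) ℝ
  | 0 => 1
  | k + 1 =>
      adlerV v ((k : ℤ) + 1) (lam + ∑ i ∈ Finset.range k, α ((i : ℤ) + 1)) x
        * transT v α lam x k


lemma mat_mul_hasDerivAt {A B : ℝ → Matrix (Fin 2) (Fin 2) ℝ}
    {A' B' : Matrix (Fin 2) (Fin 2) ℝ} {x : ℝ}
    (hA : ∀ i j, HasDerivAt (fun y => A y i j) (A' i j) x)
    (hB : ∀ i j, HasDerivAt (fun y => B y i j) (B' i j) x) :
    ∀ i j, HasDerivAt (fun y => (A y * B y) i j)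
      ((A' * B x + A x * B') i j) x := by
  intro i j
  have h := (((hA i 0).mul (hB 0 j)).add ((hA i 1).mul (hB 1 j)))
  have e1 : (fun y => (A y * B y) i j)
      = fun y => A y i 0 * B y 0 j + A y i 1 * B y 1 j := by
    funext y; simp [Matrix.mul_apply, Fin.sum_univ_two]
  rw [e1]
  refine h.congr_deriv ?_
  simp [Matrix.mul_apply, Fin.sum_univ_two]
  ring

lemma adlerV_entry_hasDerivAt (v : ℤ → ℝ → ℝ) (n : ℤ) (lam x : ℝ)
    (hd : DifferentiableAt ℝ (v n) x) :
    ∀ i j, HasDerivAt (fun y => adlerV v n lam y i j)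
      (!![deriv (v n) x, 0;
          2 * v n x * deriv (v n) x, deriv (v n) x] i j) x := by
  have hv : HasDerivAt (v n) (deriv (v n) x) x := hd.hasDerivAt
  have h2 : HasDerivAt (fun y => lam + v n y ^ 2) (2 * v n x * deriv (v n) x) x := by
    have := (hv.pow 2).const_add lam
    simpa [mul_comm, mul_assoc, mul_left_comm] using this
  intro i j
  fin_cases i <;> fin_cases j
  · simpa [adlerV] using hv
  · simpa [adlerV] using hasDerivAt_const x (1:ℝ)
  · simpa [adlerV] using h2
  · simpa [adlerV] using hv

/-- The local Lax relation for a single V-matrix. -/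
lemma adlerV_local_lax (v : ℤ → ℝ → ℝ) (α : ℤ → ℝ) (n : ℤ) (mu x : ℝ)
    (hchain : deriv (v n) x + deriv (v (n + 1)) x
      = (v (n + 1) x) ^ 2 - (v n x) ^ 2 + α n) :
    (!![deriv (v n) x, 0;
        2 * v n x * deriv (v n) x, deriv (v n) x] : Matrix (Fin 2) (Fin 2) ℝ)
      = adlerU v (n + 1) (mu + α n) x * adlerV v n mu x
        - adlerV v n mu x * adlerU v n mu x := by
  ext i j
  fin_cases i <;> fin_cases j <;>
    simp [adlerU, adlerV, Matrix.mul_apply, Fin.sum_univ_two]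
  · linear_combination (v n x) * hchain
  · linear_combination hchain

/-- The transition matrix T(λ) = V_N(λ+β_{N−1}) ⋯ V_2(λ+β_1) V_1(λ) satisfies
the Lax equation Ṫ(λ) = U_1(λ + α) T(λ) − T(λ) U_1(λ), where α = α_1 + ⋯ + α_N. -/
theorem dressing_chain_transition_lax (N : ℕ) (hN : 3 ≤ N)
    (v : ℤ → ℝ → ℝ) (α : ℤ → ℝ)
    (hsmooth : ∀ n : ℤ, ContDiff ℝ (⊤ : ℕ∞) (v n))
    (hvper : ∀ n : ℤ, v (n + (N : ℤ)) = v n)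
    (hαper : ∀ n : ℤ, α (n + (N : ℤ)) = α n)
    (hchain : ∀ (n : ℤ) (x : ℝ),
      deriv (v n) x + deriv (v (n + 1)) x = (v (n + 1) x) ^ 2 - (v n x) ^ 2 + α n) :
    ∀ (lam x : ℝ),
      (Matrix.of fun i j => deriv (fun y => transT v α lam y N i j) x)
        = adlerU v 1 (lam + ∑ n ∈ Finset.range N, α ((n : ℤ) + 1)) x * transT v α lam x N
          - transT v α lam x N * adlerU v 1 lam x := by
  intro lam x
  have key : ∀ k : ℕ, ∀ i j,
      HasDerivAt (fun y => transT v α lam y k i j)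
        ((adlerU v ((k : ℤ) + 1) (lam + ∑ i ∈ Finset.range k, α ((i : ℤ) + 1)) x
            * transT v α lam x k
          - transT v α lam x k * adlerU v 1 lam x) i j) x := by
    intro k
    induction k with
    | zero =>
        intro i j
        have h0 : HasDerivAt (fun y => transT v α lam y 0 i j) 0 x := by
          simpa [transT] using hasDerivAt_const x ((1 : Matrix (Fin 2) (Fin 2) ℝ) i j)
        convert h0 using 2
        simp [transT]
    | succ k ih =>
        set β := lam + ∑ i ∈ Finset.range k, α ((i : ℤ) + 1) with hβ
        have hd : DifferentiableAt ℝ (v ((k : ℤ) + 1)) x :=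
          ((hsmooth _).differentiable (by simp)).differentiableAt
        have hV := adlerV_entry_hasDerivAt v ((k : ℤ) + 1) β x hd
        have hprod := mat_mul_hasDerivAt hV ih
        have eβ : β + α ((k : ℤ) + 1)
            = lam + ∑ i ∈ Finset.range (k + 1), α ((i : ℤ) + 1) := by
          rw [hβ, Finset.sum_range_succ]; ring
        have eT : transT v α lam x (k + 1)
            = adlerV v ((k : ℤ) + 1) β x * transT v α lam x k := by
          simp [transT, hβ]
        have hEq :
            (!![deriv (v ((k : ℤ) + 1)) x, 0;
                2 * v ((k : ℤ) + 1) x * deriv (v ((k : ℤ) + 1)) x,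
                deriv (v ((k : ℤ) + 1)) x] * transT v α lam x k
              + adlerV v ((k : ℤ) + 1) β x
                * (adlerU v ((k : ℤ) + 1) β x * transT v α lam x k
                    - transT v α lam x k * adlerU v 1 lam x))
            = adlerU v (((k : ℕ) + 1 : ℕ) + 1)
                (lam + ∑ i ∈ Finset.range (k + 1), α ((i : ℤ) + 1)) x
                * transT v α lam x (k + 1)
              - transT v α lam x (k + 1) * adlerU v 1 lam x := by
          rw [adlerV_local_lax v α ((k : ℤ) + 1) β x (hchain _ x), eβ, eT]
          push_cast
          noncomm_ring
        intro i j
        have h := hprod i j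
        have e : (fun y => (adlerV v ((k : ℤ) + 1) β y * transT v α lam y k) i j)
            = fun y => transT v α lam y (k + 1) i j := by
          funext y; simp [transT, hβ]
        rw [e, hEq] at h
        exact h
  have hvN : v ((N : ℤ) + 1) = v 1 := by
    have := hvper 1; rwa [add_comm] at this
  have hUeq : adlerU v ((N : ℤ) + 1)
      (lam + ∑ n ∈ Finset.range N, α ((n : ℤ) + 1)) x
      = adlerU v 1 (lam + ∑ n ∈ Finset.range N, α ((n : ℤ) + 1)) x := by
    simp [adlerU, hvN]
  ext i j
  simp only [Matrix.of_apply]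
  rw [(key N i j).deriv, hUeq]
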